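/- Definition 4 satisfies the Syntactic Independence property: if the tuple of input random variables 𝐗 is independent of Z, and Z is not almost surely constant, then the program p over variables 𝐗 does not have proxy use of Z. -/
import Mathlib


namespace UsePrivacy

/-- Probability of an event under a discrete distribution. -/
noncomputable def pr {Ω : Type*} (μ : PMF Ω) (s : Set Ω) : ℝ :=
  (μ.toOuterMeasure s).toReal

/-- `X` is a perfect proxy for `Z`. -/
def PerfectProxy {Ω α β : Type*} (μ : PMF Ω) (X : Ω → α) (Z : Ω → β) : Prop :=
  ∃ (f : α → β) (g : β → α),
    pr μ {ω | Z ω = f (X ω)} = 1 ∧ pr μ {ω | g (Z ω) = X ω} = 1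

/-! The expression language: programs `p = λ x₁,…,xₙ. e` built from real constants,
variables, arithmetic operations, Boolean operations, relational operations and
if-then-else. -/

mutual
inductive AExp : ℕ → Type
  | const {n : ℕ} : ℝ → AExp n
  | var {n : ℕ} : Fin n → AExp n
  | add {n : ℕ} : AExp n → AExp n → AExp n
  | mul {n : ℕ} : AExp n → AExp n → AExp n
  | ite {n : ℕ} : BExp n → AExp n → AExp n → AExp n
inductive BExp : ℕ → Type
  | tt {n : ℕ} : BExp n
  | not {n : ℕ} : BExp n → BExp n
  | and {n : ℕ} : BExp n → BExp n → BExp n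
  | le {n : ℕ} : AExp n → AExp n → BExp n
end

noncomputable section

-- `⟦p⟧`: the denotation (the function computed by the program).
mutual
def AExp.eval : {n : ℕ} → AExp n → (Fin n → ℝ) → ℝ
  | _, .const c, _ => c
  | _, .var i, v => v i
  | _, .add a b, v => a.eval v + b.eval v
  | _, .mul a b, v => a.eval v * b.eval v
  | _, .ite c a b, v => if c.eval v then a.eval v else b.eval v
def BExp.eval : {n : ℕ} → BExp n → (Fin n → ℝ) → Bool
  | _, .tt, _ => true
  | _, .not b, v => ! b.eval v
  | _, .and a b, v => a.eval v && b.eval v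
  | _, .le a b, v => decide (a.eval v ≤ b.eval v)
end

-- `[q/u]p`: substitution of the program `q` for the fresh (last) variable `u` of `p`.
mutual
def AExp.subst : {n : ℕ} → AExp (n + 1) → AExp n → AExp n
  | _, .const c, _ => .const c
  | _, .var i, q => Fin.lastCases q (fun j => AExp.var j) i
  | _, .add a b, q => .add (a.subst q) (b.subst q)
  | _, .mul a b, q => .mul (a.subst q) (b.subst q)
  | _, .ite c a b, q => .ite (c.subst q) (a.subst q) (b.subst q)
def BExp.subst : {n : ℕ} → BExp (n + 1) → AExp n → BExp n
  | _, .tt, _ => .tt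
  | _, .not b, q => .not (b.subst q)
  | _, .and a b, q => .and (a.subst q) (b.subst q)
  | _, .le a b, q => .le (a.subst q) (b.subst q)
end

/-- The random variable `⟦p⟧(𝐗)` obtained by evaluating program `p` on the tuple of
input random variables `𝐗`. -/
def evalRV {Ω : Type*} {n : ℕ} (X : Fin n → Ω → ℝ) (p : AExp n) : Ω → ℝ :=
  fun ω => p.eval (fun i => X i ω)

/-- The fresh (last) variable `u` is influential in `p₂`: there exist values `x, u₁, u₂`
with `⟦p₂⟧(x, u₁) ≠ ⟦p₂⟧(x, u₂)`. -/
def InfluentialLast {n : ℕ} (p₂ : AExp (n + 1)) : Prop :=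
  ∃ (x : Fin n → ℝ) (u₁ u₂ : ℝ), p₂.eval (Fin.snoc x u₁) ≠ p₂.eval (Fin.snoc x u₂)

/-- Definition 4: `p` has proxy use of `Z` iff there is an influential decomposition
`(p₁, u, p₂)` of `p` such that `⟦p₁⟧(𝐗)` is a perfect proxy for `Z`. -/
def ProxyUse {Ω 𝒵 : Type*} {n : ℕ} (μ : PMF Ω) (X : Fin n → Ω → ℝ)
    (p : AExp n) (Z : Ω → 𝒵) : Prop :=
  ∃ (p₁ : AExp n) (p₂ : AExp (n + 1)),
    p₂.subst p₁ = p ∧ InfluentialLast p₂ ∧ PerfectProxy μ (evalRV X p₁) Z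

end

/-- The tuple of input random variables `𝐗` is independent of `Z`. -/
def IndepVecR {Ω 𝒵 : Type*} {n : ℕ} (μ : PMF Ω) (X : Fin n → Ω → ℝ) (Z : Ω → 𝒵) : Prop :=
  ∀ (v : Fin n → ℝ) (z : 𝒵),
    pr μ {ω | (∀ i, X i ω = v i) ∧ Z ω = z}
      = pr μ {ω | ∀ i, X i ω = v i} * pr μ {ω | Z ω = z}

section Aux
open scoped ENNReal

lemma aux_ne_top {Ω : Type*} (μ : PMF Ω) (s : Set Ω) : μ.toOuterMeasure s ≠ ⊤ := by
  refine ne_top_of_le_ne_top (by simp : (1:ℝ≥0∞) ≠ ⊤) ?_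
  rw [PMF.toOuterMeasure_apply, ← μ.tsum_coe]
  exact ENNReal.tsum_le_tsum fun a => Set.indicator_le_self s (⇑μ) a

lemma pr_eq_one_iff {Ω : Type*} (μ : PMF Ω) (s : Set Ω) :
    pr μ s = 1 ↔ μ.support ⊆ s := by
  rw [pr, ENNReal.toReal_eq_one_iff, PMF.toOuterMeasure_apply_eq_one_iff]

lemma pr_pos_iff {Ω : Type*} (μ : PMF Ω) (s : Set Ω) :
    0 < pr μ s ↔ ∃ ω ∈ μ.support, ω ∈ s := by
  rw [pr, ENNReal.toReal_pos_iff]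
  constructor
  · rintro ⟨h0, -⟩
    have := (not_iff_not.2 (PMF.toOuterMeasure_apply_eq_zero_iff μ s)).1 h0.ne'
    rw [Set.not_disjoint_iff] at this
    exact this
  · rintro ⟨ω, hω, hs⟩
    refine ⟨?_, lt_of_le_of_ne le_top (aux_ne_top μ s)⟩
    rw [pos_iff_ne_zero, Ne, PMF.toOuterMeasure_apply_eq_zero_iff, Set.not_disjoint_iff]
    exact ⟨ω, hω, hs⟩

end Aux

/-- **Syntactic Independence**: if the tuple of input random variables `𝐗` is
independent of `Z`, and `Z` is not almost surely constant, then the program `p`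
over `𝐗` does not have proxy use of `Z`. -/
theorem syntactic_independence {Ω 𝒵 : Type*} {n : ℕ} (μ : PMF Ω)
    (X : Fin n → Ω → ℝ) (Z : Ω → 𝒵) (p : AExp n)
    (hindep : IndepVecR μ X Z)
    (hnc : ¬ ∃ z₀ : 𝒵, pr μ {ω | Z ω = z₀} = 1) :
    ¬ ProxyUse μ X p Z := by
  rintro ⟨p₁, p₂, hsub, hinf, f, g, h1, h2⟩
  clear hinf hsub h2
  rw [pr_eq_one_iff] at h1
  obtain ⟨ω₀, hω₀⟩ := μ.support_nonempty
  set z₁ := Z ω₀ with hz₁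
  have hne1 : pr μ {ω | Z ω = z₁} ≠ 1 := fun h => hnc ⟨z₁, h⟩
  have : ¬ μ.support ⊆ {ω | Z ω = z₁} := fun h => hne1 ((pr_eq_one_iff μ _).2 h)
  obtain ⟨ω₁, hω₁, hz⟩ := Set.not_subset.1 this
  set z₂ := Z ω₁ with hz₂
  set v : Fin n → ℝ := fun i => X i ω₀ with hv
  have hX : 0 < pr μ {ω | ∀ i, X i ω = v i} :=
    (pr_pos_iff μ _).2 ⟨ω₀, hω₀, fun i => rfl⟩
  have hZ : 0 < pr μ {ω | Z ω = z₂} := (pr_pos_iff μ _).2 ⟨ω₁, hω₁, rfl⟩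
  have hprod : 0 < pr μ {ω | (∀ i, X i ω = v i) ∧ Z ω = z₂} := by
    rw [hindep v z₂]; exact mul_pos hX hZ
  obtain ⟨ω₂, hω₂, hXv, hZ2⟩ := (pr_pos_iff μ _).1 hprod
  have e0 : Z ω₀ = f (evalRV X p₁ ω₀) := h1 hω₀
  have e2 : Z ω₂ = f (evalRV X p₁ ω₂) := h1 hω₂
  have : evalRV X p₁ ω₂ = evalRV X p₁ ω₀ := by
    unfold evalRV
    congr 1
    funext i
    exact hXv i
  apply hz
  show Z ω₁ = Z ω₀
  rw [show Z ω₁ = Z ω₂ from hZ2.symm, e2, this, ← e0]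


end UsePrivacy
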